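/- There exist a locally finite 2-connected simple graph G and an edge set D ⊆ E(G) such that D ∩ B is finite and of even cardinality for every bond B of G, but D ∩ C is infinite for some cut C of G. -/

import Mathlib

open Set

variable {V : Type*}

/-- The edge set of a cycle of `G` (a finite circuit). -/
def IsCircuit (G : SimpleGraph V) (C : Set (Sym2 V)) : Prop :=
  ∃ (v : V) (w : G.Walk v v), w.IsCycle ∧ C = {e | e ∈ w.edges}

/-- The cut `E(A, V∖A)`: edges of `G` with exactly one endvertex in `A`. -/
def cutEdges (G : SimpleGraph V) (A : Set V) : Set (Sym2 V) :=
  {e | ∃ x y, G.Adj x y ∧ x ∈ A ∧ y ∉ A ∧ e = s(x, y)}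

/-- `C` is a cut of `G`. -/
def IsCut (G : SimpleGraph V) (C : Set (Sym2 V)) : Prop :=
  ∃ A : Set V, C = cutEdges G A

/-- A bond is a ⊆-minimal nonempty cut. -/
def IsBond (G : SimpleGraph V) (B : Set (Sym2 V)) : Prop :=
  IsCut G B ∧ B ≠ ∅ ∧ ∀ C, IsCut G C → C ≠ ∅ → C ⊆ B → C = B

/-- Two edge sets are orthogonal: their intersection is finite and of even cardinality. -/
def EvenInter (D F : Set (Sym2 V)) : Prop :=
  (D ∩ F).Finite ∧ Even (D ∩ F).ncard

/-- A ray in `G`. -/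
def IsRay (G : SimpleGraph V) (R : ℕ → V) : Prop :=
  Function.Injective R ∧ ∀ n, G.Adj (R n) (R (n + 1))

/-- A double ray in `G`. -/
def IsDoubleRay (G : SimpleGraph V) (R : ℤ → V) : Prop :=
  Function.Injective R ∧ ∀ n, G.Adj (R n) (R (n + 1))

/-- The edge set of a double ray. -/
def doubleRayEdges (R : ℤ → V) : Set (Sym2 V) :=
  {e | ∃ n : ℤ, e = s(R n, R (n + 1))}

/-- `D` is the edge set of some double ray of `G`. -/
def IsDoubleRayEdgeSet (G : SimpleGraph V) (D : Set (Sym2 V)) : Prop :=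
  ∃ R : ℤ → V, IsDoubleRay G R ∧ D = doubleRayEdges R

/-- `a` and `b` are joined by a walk of `G` all of whose vertices avoid `S`,
i.e. they lie in a common component of `G − S`. -/
def ConnAvoiding (G : SimpleGraph V) (S : Set V) (a b : V) : Prop :=
  ∃ w : G.Walk a b, ∀ x ∈ w.support, x ∉ S

/-- `v` lies in `C(S,R)`, the component of `G − S` containing a tail of the ray `R`. -/
def InC (G : SimpleGraph V) (S : Set V) (R : ℕ → V) (v : V) : Prop :=
  ∃ m : ℕ, (∀ n, R (m + n) ∉ S) ∧ ConnAvoiding G S v (R m)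

/-- The rays `R` and `R'` are equivalent (lie in the same end): for every finite `S`
some component of `G − S` contains a tail of both. -/
def RayEquiv (G : SimpleGraph V) (R R' : ℕ → V) : Prop :=
  ∀ S : Set V, S.Finite → ∃ m m', (∀ n, R (m + n) ∉ S) ∧ (∀ n, R' (m' + n) ∉ S) ∧
    ConnAvoiding G S (R m) (R' m')

/-- The sequence `v` of vertices converges to the end of the ray `R`: for every finite `S`
all but finitely many `v i` lie in `C(S,R)`. -/
def ConvergesTo (G : SimpleGraph V) (R : ℕ → V) (v : ℕ → V) : Prop :=
  ∀ S : Set V, S.Finite → {i : ℕ | ¬ InC G S R (v i)}.Finite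

/-- `F` is the vertex set of a `k`-fan from `u` to `Y`: a union of `k` paths starting
at `u`, pairwise sharing no vertex other than `u`, ending in `k` distinct vertices of `Y`. -/
def IsFan (G : SimpleGraph V) (k : ℕ) (u : V) (Y : Set V) (F : Set V) : Prop :=
  ∃ (ends : Fin k → V) (P : ∀ i, G.Walk u (ends i)),
    (∀ i, (P i).IsPath) ∧ (∀ i, ends i ∈ Y) ∧ Function.Injective ends ∧
    (∀ i j, i ≠ j → ∀ x, x ∈ (P i).support → x ∈ (P j).support → x = u) ∧
    F = ⋃ i, {x | x ∈ (P i).support}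

/-- `L` is the vertex set of a `k`-linkage from `x` to `y`: a union of `k` paths from
`x` to `y` pairwise sharing no vertices other than `x` and `y`. -/
def IsLinkage (G : SimpleGraph V) (k : ℕ) (x y : V) (L : Set V) : Prop :=
  ∃ P : Fin k → G.Walk x y,
    (∀ i, (P i).IsPath) ∧ Function.Injective P ∧
    (∀ i j, i ≠ j → ∀ z, z ∈ (P i).support → z ∈ (P j).support → z = x ∨ z = y) ∧
    L = ⋃ i, {z | z ∈ (P i).support}

/-- The end represented by the ray `R` is `k`-padded: for every equivalent ray `R'`
there is a finite `S` such that every vertex of `C(S,R')` admits a `k`-fan to the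
image of `R'` in `G`. -/
def IsPaddedEnd (G : SimpleGraph V) (k : ℕ) (R : ℕ → V) : Prop :=
  ∀ R' : ℕ → V, IsRay G R' → RayEquiv G R R' →
    ∃ S : Set V, S.Finite ∧ ∀ v, InC G S R' v → ∃ F, IsFan G k v (Set.range R') F

/-- `G` is `k`-padded at infinity: every end of `G` is `k`-padded. -/
def PaddedAtInfinity (G : SimpleGraph V) (k : ℕ) : Prop :=
  ∀ R : ℕ → V, IsRay G R → IsPaddedEnd G k R

/-- `G` is `k`-connected: it has more than `k` vertices and deleting fewer than `k`
vertices leaves it connected. -/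
def KConnected (G : SimpleGraph V) (k : ℕ) : Prop :=
  (k : ℕ∞) < (Set.univ : Set V).encard ∧
  ∀ S : Set V, S.Finite → S.ncard < k → (G.induce (Sᶜ : Set V)).Connected

/-- The algebraic cycle space: edge sets meeting every vertex in an even number of edges. -/
def CAlg (G : SimpleGraph V) : Set (Set (Sym2 V)) :=
  {D | D ⊆ G.edgeSet ∧ ∀ v : V, {e ∈ D | v ∈ e}.Finite ∧ Even {e ∈ D | v ∈ e}.ncard}

/-- The finite-cycle space: symmetric-difference sums of finitely many finite circuits. -/
def CFin (G : SimpleGraph V) : Set (Set (Sym2 V)) :=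
  {D | ∃ l : List (Set (Sym2 V)), (∀ C ∈ l, IsCircuit G C) ∧ D = l.foldr symmDiff ∅}

/-!
The graph is a one-way infinite chain of diamonds: 4-cycles `joint n, upper n, joint (n+1),
lower n`, glued at the joints, together with a ray `ray 0, ray 1, …` attached by the edges
`ray n — joint n`, which keeps it 2-connected. `D` is the union of the diamonds.

Each diamond is a circuit, so every cut meets it evenly, and a finite intersection of `D`
with a cut is even. The two sides of a bond induce connected subgraphs; when both are
infinite, a connected set climbing from level `k` to level `k + 1` must contain `joint (k+1)`
or the ray edge there, so from some level on all joints, and then all diamonds, lie on one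
side, and the bond meets only finitely many diamonds. The cut around all the `upper n`
meets every diamond, hence `D` infinitely.
-/

open scoped Function

namespace ConnAvoiding

variable {G : SimpleGraph V} {S T : Set V} {a b c : V}

theorem refl (ha : a ∉ S) : ConnAvoiding G S a a :=
  ⟨.nil, by simpa using ha⟩

theorem symm (h : ConnAvoiding G S a b) : ConnAvoiding G S b a := by
  obtain ⟨w, hw⟩ := h
  exact ⟨w.reverse, by simpa using hw⟩

theorem trans (h : ConnAvoiding G S a b) (h' : ConnAvoiding G S b c) : ConnAvoiding G S a c := by
  obtain ⟨w, hw⟩ := h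
  obtain ⟨w', hw'⟩ := h'
  refine ⟨w.append w', fun x hx => ?_⟩
  rcases w.mem_support_append_iff w' |>.1 hx with hx | hx
  exacts [hw x hx, hw' x hx]

theorem of_adj (h : G.Adj a b) (ha : a ∉ S) (hb : b ∉ S) : ConnAvoiding G S a b :=
  ⟨h.toWalk, by simp [ha, hb]⟩

theorem mono (hTS : T ⊆ S) (h : ConnAvoiding G S a b) : ConnAvoiding G T a b := by
  obtain ⟨w, hw⟩ := h
  exact ⟨w, fun x hx hxT => hw x hx (hTS hxT)⟩

theorem left_notMem (h : ConnAvoiding G S a b) : a ∉ S := by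
  obtain ⟨w, hw⟩ := h
  exact hw a w.start_mem_support

theorem right_notMem (h : ConnAvoiding G S a b) : b ∉ S :=
  h.symm.left_notMem

theorem of_mem_support {w : G.Walk a b} (hw : ∀ x ∈ w.support, x ∉ S) (hc : c ∈ w.support) :
    ConnAvoiding G S a c := by
  classical
  exact ⟨w.takeUntil c hc, fun x hx => hw x (w.support_takeUntil_subset_support hc hx)⟩

theorem exists_adj_of_ne (h : ConnAvoiding G S a b) (hab : a ≠ b) : ∃ c ∉ S, G.Adj a c := by
  obtain ⟨w, hw⟩ := h
  cases w with
  | nil => exact absurd rfl hab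
  | cons hadj w => exact ⟨_, hw _ (by simp), hadj⟩

theorem eq_of_neighborSet_subset (h : ConnAvoiding G S a b) (ha : G.neighborSet a ⊆ S) :
    a = b := by
  by_contra hab
  obtain ⟨c, hcS, hac⟩ := h.exists_adj_of_ne hab
  exact hcS (ha hac)

theorem reachable_induce (h : ConnAvoiding G S a b) :
    (G.induce Sᶜ).Reachable ⟨a, h.left_notMem⟩ ⟨b, h.right_notMem⟩ := by
  obtain ⟨w, hw⟩ := h
  induction w with
  | nil => rfl
  | @cons a c _ hadj w ih =>
    have hstep : (G.induce Sᶜ).Adj ⟨a, hw a (by simp)⟩ ⟨c, hw c (by simp)⟩ := hadj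
    exact hstep.reachable.trans (ih fun x hx => hw x (by simp [hx]))

end ConnAvoiding

theorem induce_compl_connected_of_connAvoiding {G : SimpleGraph V} {S : Set V} {a : V}
    (ha : a ∉ S) (h : ∀ b c, b ∉ S → c ∉ S → ConnAvoiding G S b c) :
    (G.induce Sᶜ).Connected :=
  (SimpleGraph.connected_iff _).2
    ⟨fun ⟨b, hb⟩ ⟨c, hc⟩ => (h b c hb hc).reachable_induce, ⟨⟨a, ha⟩⟩⟩

theorem exists_connAvoiding_adj_mem {G : SimpleGraph V} {T : Set V} {a b : V} (w : G.Walk a b)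
    (ha : a ∉ T) (hb : b ∈ T) : ∃ c d, ConnAvoiding G T a c ∧ G.Adj c d ∧ d ∈ T := by
  induction w with
  | nil => exact absurd hb ha
  | @cons a c _ hadj w ih =>
    by_cases hc : c ∈ T
    · exact ⟨a, c, .refl ha, hadj, hc⟩
    · obtain ⟨d, e, hcd, hde, he⟩ := ih hc hb
      exact ⟨d, e, (ConnAvoiding.of_adj hadj ha hc).trans hcd, hde, he⟩

section Cuts

variable {G : SimpleGraph V} {A : Set V}

theorem mem_cutEdges_iff {a b : V} (h : G.Adj a b) :
    s(a, b) ∈ cutEdges G A ↔ ¬(a ∈ A ↔ b ∈ A) := by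
  constructor
  · rintro ⟨x, y, -, hx, hy, he⟩
    rcases Sym2.eq_iff.1 he with ⟨rfl, rfl⟩ | ⟨rfl, rfl⟩ <;> tauto
  · intro hab
    by_cases ha : a ∈ A
    · exact ⟨a, b, h, ha, by tauto, rfl⟩
    · exact ⟨b, a, h.symm, by tauto, ha, Sym2.eq_swap⟩

theorem cutEdges_compl : cutEdges G Aᶜ = cutEdges G A := by
  ext e
  constructor <;>
  · rintro ⟨x, y, h, hx, hy, rfl⟩
    exact ⟨y, x, h.symm, by simpa using hy, by simpa using hx, Sym2.eq_swap⟩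

theorem cutEdges_finite (hG : ∀ v, (G.neighborSet v).Finite) (hA : A.Finite) :
    (cutEdges G A).Finite := by
  refine (hA.biUnion fun v _ => (hG v).biUnion fun w _ => finite_singleton s(v, w)).subset ?_
  rintro _ ⟨x, y, h, hx, -, rfl⟩
  simp only [mem_iUnion]
  exact ⟨x, hx, y, h, rfl⟩

open Classical in
theorem SimpleGraph.Walk.even_countP_cutEdges_iff {u v : V} (w : G.Walk u v) :
    Even (w.edges.countP (· ∈ cutEdges G A)) ↔ (u ∈ A ↔ v ∈ A) := by
  induction w with
  | nil => simp
  | @cons u x v h w ih =>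
    by_cases hu : u ∈ A <;> by_cases hx : x ∈ A <;>
      simp [mem_cutEdges_iff h, Nat.even_add_one, ih, hu, hx]

theorem IsCircuit.even_ncard_inter_cutEdges {C : Set (Sym2 V)} (hC : IsCircuit G C) :
    Even (C ∩ cutEdges G A).ncard := by
  classical
  obtain ⟨v, w, hw, rfl⟩ := hC
  have hset : {e | e ∈ w.edges} ∩ cutEdges G A =
      ↑(w.edges.filter (· ∈ cutEdges G A)).toFinset := by
    ext; simp
  rw [hset, ncard_coe_finset, List.toFinset_card_of_nodup (hw.edges_nodup.filter _),
    ← List.countP_eq_length_filter]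
  exact w.even_countP_cutEdges_iff.2 Iff.rfl

end Cuts

theorem Set.even_ncard_iUnion {ι α : Type*} {s : ι → Set α} (hs : Pairwise (Disjoint on s))
    (hfin : (⋃ i, s i).Finite) (heven : ∀ i, Even (s i).ncard) : Even (⋃ i, s i).ncard := by
  obtain ⟨hsfin, hne⟩ := (finite_iUnion_iff hs).1 hfin
  have hunion : ⋃ i, s i = ⋃ i ∈ {i | (s i).Nonempty}, s i := by
    ext x
    simp only [mem_iUnion, mem_ofPred_eq]
    exact ⟨fun ⟨i, hx⟩ => ⟨i, ⟨x, hx⟩, hx⟩, fun ⟨i, _, hx⟩ => ⟨i, hx⟩⟩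
  rw [hunion, hne.ncard_biUnion (fun i _ => hsfin i) fun i _ j _ hij => hs hij]
  exact finsum_mem_induction Even .zero (fun _ _ => Even.add) fun i _ => heven i

section Bonds

variable {G : SimpleGraph V}

def componentAvoiding (G : SimpleGraph V) (S : Set V) (y : V) : Set V :=
  {z | ConnAvoiding G S y z}

variable {S : Set V} {y : V}

theorem connAvoiding_compl_componentAvoiding {z : V} (hz : z ∈ componentAvoiding G S y) :
    ConnAvoiding G (componentAvoiding G S y)ᶜ y z := by
  obtain ⟨w, hw⟩ := hz
  exact ⟨w, fun x hx => not_not.2 (ConnAvoiding.of_mem_support hw hx)⟩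

theorem ConnAvoiding.componentAvoiding_of_notMem {a b : V} (h : ConnAvoiding G S a b)
    (ha : a ∉ componentAvoiding G S y) : ConnAvoiding G (componentAvoiding G S y) a b := by
  obtain ⟨w, hw⟩ := h
  exact ⟨w, fun x hx hxy => ha (hxy.trans (ConnAvoiding.of_mem_support hw hx).symm)⟩

theorem cutEdges_componentAvoiding_subset :
    cutEdges G (componentAvoiding G S y) ⊆ cutEdges G S := by
  rintro _ ⟨a, b, h, ha, hb, rfl⟩
  have hbS : b ∈ S := by
    by_contra hbS
    exact hb (ha.trans (.of_adj h ha.right_notMem hbS))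
  exact ⟨b, a, h.symm, hbS, ha.right_notMem, Sym2.eq_swap⟩

theorem IsBond.exists_connAvoiding_sides (hG : G.Preconnected) {B : Set (Sym2 V)}
    (hB : IsBond G B) : ∃ K, B = cutEdges G K ∧
      (∀ a b, a ∈ K → b ∈ K → ConnAvoiding G Kᶜ a b) ∧
      (∀ a b, a ∉ K → b ∉ K → ConnAvoiding G K a b) := by
  -- Shrink `A` to the component `A₁` of `G[A]` at `x`, then take the component `K` of `G - A₁`
  -- at `y`; by minimality neither step changes the cut.
  obtain ⟨⟨A, rfl⟩, hne, hmin⟩ := hB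
  obtain ⟨_, x, y, hxy, hxA, hyA, rfl⟩ := nonempty_iff_ne_empty.2 hne
  set A₁ := componentAvoiding G Aᶜ x
  have hxA₁ : x ∈ A₁ := .refl (not_not.2 hxA)
  have hyA₁ : y ∉ A₁ := fun h => h.right_notMem hyA
  have hA₁ : cutEdges G A₁ = cutEdges G A :=
    hmin _ ⟨A₁, rfl⟩ (nonempty_iff_ne_empty.1 ⟨_, x, y, hxy, hxA₁, hyA₁, rfl⟩)
      (cutEdges_componentAvoiding_subset.trans cutEdges_compl.subset)
  set K := componentAvoiding G A₁ y
  have hKA₁ : K ⊆ A₁ᶜ := fun _ hz => hz.right_notMem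
  have hK : cutEdges G K = cutEdges G A :=
    hmin _ ⟨K, rfl⟩
      (nonempty_iff_ne_empty.1 ⟨_, y, x, hxy.symm, .refl hyA₁, fun h => hKA₁ h hxA₁, rfl⟩)
      (cutEdges_componentAvoiding_subset.trans hA₁.subset)
  have hA₁x : ∀ a ∈ A₁, ConnAvoiding G K a x := fun a ha =>
    (connAvoiding_compl_componentAvoiding ha).mono hKA₁ |>.symm
  have hx : ∀ a ∉ K, ConnAvoiding G K a x := by
    intro a ha
    by_cases haA₁ : a ∈ A₁
    · exact hA₁x a haA₁
    obtain ⟨c, d, hac, hcd, hdA₁⟩ := exists_connAvoiding_adj_mem (hG a x).some haA₁ hxA₁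
    have hac : ConnAvoiding G K a c := hac.componentAvoiding_of_notMem ha
    exact hac.trans ((ConnAvoiding.of_adj hcd hac.right_notMem fun h => hKA₁ h hdA₁).trans
      (hA₁x d hdA₁))
  refine ⟨K, hK.symm, fun a b ha hb => ?_, fun a b ha hb => (hx a ha).trans (hx b hb).symm⟩
  exact (connAvoiding_compl_componentAvoiding ha).symm.trans
    (connAvoiding_compl_componentAvoiding hb)

end Bonds

namespace DiamondChain

open SimpleGraph

abbrev Vertex : Type := ℕ × Fin 4

@[simp] def joint (n : ℕ) : Vertex := (n, 0)
@[simp] def upper (n : ℕ) : Vertex := (n, 1)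
@[simp] def lower (n : ℕ) : Vertex := (n, 2)
@[simp] def ray (n : ℕ) : Vertex := (n, 3)

def diamond (n : ℕ) : Set (Sym2 Vertex) :=
  {s(joint n, upper n), s(upper n, joint (n + 1)), s(joint (n + 1), lower n), s(lower n, joint n)}

def rayEdges (n : ℕ) : Set (Sym2 Vertex) :=
  {s(ray n, ray (n + 1)), s(ray n, joint n)}

def graph : SimpleGraph Vertex :=
  fromEdgeSet (⋃ n, diamond n ∪ rayEdges n)

def diamonds : Set (Sym2 Vertex) :=
  ⋃ n, diamond n

theorem exists_mem_of_adj {a b : Vertex} (h : graph.Adj a b) :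
    ∃ n, s(a, b) ∈ diamond n ∪ rayEdges n :=
  mem_iUnion.1 ((fromEdgeSet_adj _).1 h).1

theorem level_le_of_adj {a b : Vertex} (h : graph.Adj a b) : b.1 ≤ a.1 + 1 := by
  obtain ⟨n, hn⟩ := exists_mem_of_adj h
  simp [diamond, rayEdges, Prod.ext_iff] at hn
  omega

theorem eq_of_adj_of_level_le {a b : Vertex} {k : ℕ} (h : graph.Adj a b) (ha : a.1 ≤ k)
    (hb : k < b.1) : b = joint (k + 1) ∨ a = ray k ∧ b = ray (k + 1) := by
  obtain ⟨n, hn⟩ := exists_mem_of_adj h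
  simp [diamond, rayEdges, Prod.ext_iff] at hn ⊢
  omega

theorem neighborSet_upper (n : ℕ) : graph.neighborSet (upper n) ⊆ {joint n, joint (n + 1)} := by
  intro b h
  obtain ⟨m, hm⟩ := exists_mem_of_adj h
  simp [diamond, rayEdges, Prod.ext_iff] at hm ⊢
  omega

theorem neighborSet_lower (n : ℕ) : graph.neighborSet (lower n) ⊆ {joint n, joint (n + 1)} := by
  intro b h
  obtain ⟨m, hm⟩ := exists_mem_of_adj h
  simp [diamond, rayEdges, Prod.ext_iff] at hm ⊢
  omega

theorem adj_of_mem {a b : Vertex} {n : ℕ} (h : s(a, b) ∈ diamond n ∪ rayEdges n) :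
    graph.Adj a b := by
  refine (fromEdgeSet_adj _).2 ⟨mem_iUnion.2 ⟨n, h⟩, ?_⟩
  rintro rfl
  simp [diamond, rayEdges, Prod.ext_iff] at h
  omega

theorem adj_joint_upper (n : ℕ) : graph.Adj (joint n) (upper n) :=
  adj_of_mem (n := n) (by simp [diamond])

theorem adj_upper_joint_succ (n : ℕ) : graph.Adj (upper n) (joint (n + 1)) :=
  adj_of_mem (n := n) (by simp [diamond])

theorem adj_joint_lower (n : ℕ) : graph.Adj (joint n) (lower n) :=
  adj_of_mem (n := n) (by simp [diamond])

theorem adj_lower_joint_succ (n : ℕ) : graph.Adj (lower n) (joint (n + 1)) :=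
  adj_of_mem (n := n) (by simp [diamond])

theorem adj_ray_ray_succ (n : ℕ) : graph.Adj (ray n) (ray (n + 1)) :=
  adj_of_mem (n := n) (by simp [rayEdges])

theorem adj_ray_joint (n : ℕ) : graph.Adj (ray n) (joint n) :=
  adj_of_mem (n := n) (by simp [rayEdges])

theorem diamonds_subset_edgeSet : diamonds ⊆ graph.edgeSet :=
  iUnion_subset fun _ e he => by
    induction e using Sym2.ind
    exact adj_of_mem (subset_union_left he)

theorem vertex_cases (v : Vertex) :
    ∃ n, v = joint n ∨ v = upper n ∨ v = lower n ∨ v = ray n := by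
  obtain ⟨n, i⟩ := v
  fin_cases i <;> simp

theorem finite_setOf_level_le (k : ℕ) : {a : Vertex | a.1 ≤ k}.Finite :=
  ((finite_Iic k).prod finite_univ).subset fun _ ha => ⟨ha, trivial⟩

theorem neighborSet_finite (v : Vertex) : (graph.neighborSet v).Finite :=
  (finite_setOf_level_le (v.1 + 1)).subset fun _ => level_le_of_adj

theorem connAvoiding_joint_succ {L : ℕ} {v : Vertex} (hv : L ≤ v.1) :
    ConnAvoiding graph {x | x.1 < L} v (joint (v.1 + 1)) := by
  have step : ∀ {a b : Vertex}, graph.Adj a b → L ≤ a.1 → L ≤ b.1 →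
      ConnAvoiding graph {x | x.1 < L} a b :=
    fun h ha hb => .of_adj h (not_lt.2 ha) (not_lt.2 hb)
  obtain ⟨n, rfl | rfl | rfl | rfl⟩ := vertex_cases v <;>
    simp only [joint, upper, lower, ray] at hv ⊢
  · exact (step (adj_joint_upper n) hv hv).trans
      (step (adj_upper_joint_succ n) hv (by simp; omega))
  · exact step (adj_upper_joint_succ n) hv (by simp; omega)
  · exact step (adj_lower_joint_succ n) hv (by simp; omega)
  · exact (step (adj_ray_joint n) hv hv).trans
      ((step (adj_joint_upper n) hv hv).trans
        (step (adj_upper_joint_succ n) hv (by simp; omega)))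

theorem connAvoiding_joint_joint {L m m' : ℕ} (hm : L ≤ m) (hmm' : m ≤ m') :
    ConnAvoiding graph {x | x.1 < L} (joint m) (joint m') := by
  induction m', hmm' using Nat.le_induction with
  | base => exact .refl (by simpa using hm)
  | succ k hk ih => exact ih.trans (connAvoiding_joint_succ (v := joint k) (by simp; omega))

theorem connAvoiding_of_le_level {L : ℕ} {v w : Vertex} (hv : L ≤ v.1) (hw : L ≤ w.1) :
    ConnAvoiding graph {x | x.1 < L} v w :=
  ((connAvoiding_joint_succ hv).trans (connAvoiding_joint_joint (by omega) (by omega))).trans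
    ((connAvoiding_joint_succ hw).trans
      (connAvoiding_joint_joint (m' := v.1 + w.1 + 1) (by omega) (by omega))).symm

theorem exists_connAvoiding_level_succ {s v : Vertex} (hv : v ≠ s) :
    ∃ w : Vertex, w.1 = v.1 + 1 ∧ ConnAvoiding graph {s} v w := by
  have step : ∀ {a b : Vertex}, graph.Adj a b → a ≠ s → b ≠ s →
      ConnAvoiding graph {s} a b := fun h ha hb => .of_adj h ha hb
  obtain ⟨n, rfl | rfl | rfl | rfl⟩ := vertex_cases v
  · by_cases h1 : s = joint (n + 1)
    · subst h1
      exact ⟨ray (n + 1), by simp, (step (adj_ray_joint n).symm hv (by simp)).trans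
        (step (adj_ray_ray_succ n) (by simp) (by simp))⟩
    by_cases h2 : s = upper n
    · subst h2
      exact ⟨joint (n + 1), by simp, (step (adj_joint_lower n) hv (by simp)).trans
        (step (adj_lower_joint_succ n) (by simp) (Ne.symm h1))⟩
    exact ⟨joint (n + 1), by simp, (step (adj_joint_upper n) hv (Ne.symm h2)).trans
      (step (adj_upper_joint_succ n) (Ne.symm h2) (Ne.symm h1))⟩
  · by_cases h1 : s = joint (n + 1)
    · subst h1
      exact ⟨ray (n + 1), by simp, (step (adj_joint_upper n).symm hv (by simp)).trans
        ((step (adj_ray_joint n).symm (by simp) (by simp)).trans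
          (step (adj_ray_ray_succ n) (by simp) (by simp)))⟩
    exact ⟨joint (n + 1), by simp, step (adj_upper_joint_succ n) hv (Ne.symm h1)⟩
  · by_cases h1 : s = joint (n + 1)
    · subst h1
      exact ⟨ray (n + 1), by simp, (step (adj_joint_lower n).symm hv (by simp)).trans
        ((step (adj_ray_joint n).symm (by simp) (by simp)).trans
          (step (adj_ray_ray_succ n) (by simp) (by simp)))⟩
    exact ⟨joint (n + 1), by simp, step (adj_lower_joint_succ n) hv (Ne.symm h1)⟩
  · by_cases h1 : s = ray (n + 1)
    · subst h1
      exact ⟨joint (n + 1), by simp, (step (adj_ray_joint n) hv (by simp)).trans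
        ((step (adj_joint_upper n) (by simp) (by simp)).trans
          (step (adj_upper_joint_succ n) (by simp) (by simp)))⟩
    exact ⟨ray (n + 1), by simp, step (adj_ray_ray_succ n) hv (Ne.symm h1)⟩

theorem exists_connAvoiding_level_ge {s v : Vertex} (hv : v ≠ s) (m : ℕ) :
    ∃ w : Vertex, v.1 + m ≤ w.1 ∧ ConnAvoiding graph {s} v w := by
  induction m with
  | zero => exact ⟨v, le_rfl, .refl hv⟩
  | succ m ih =>
    obtain ⟨w, hw, hvw⟩ := ih
    obtain ⟨w', hw', hww'⟩ := exists_connAvoiding_level_succ hvw.right_notMem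
    exact ⟨w', by omega, hvw.trans hww'⟩

theorem connAvoiding_singleton {s v w : Vertex} (hv : v ≠ s) (hw : w ≠ s) :
    ConnAvoiding graph {s} v w := by
  obtain ⟨v', hv', hvv'⟩ := exists_connAvoiding_level_ge hv (s.1 + 1)
  obtain ⟨w', hw', hww'⟩ := exists_connAvoiding_level_ge hw (s.1 + 1)
  have hS : ({s} : Set Vertex) ⊆ {x | x.1 < s.1 + 1} := by simp
  exact hvv'.trans (((connAvoiding_of_le_level (by omega) (by omega)).mono hS).trans hww'.symm)

theorem connAvoiding_empty (v w : Vertex) : ConnAvoiding graph ∅ v w :=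
  (connAvoiding_singleton (s := joint (v.1 + w.1 + 1))
    (ne_of_apply_ne Prod.fst (by simp; omega)) (ne_of_apply_ne Prod.fst (by simp; omega))).mono
    (empty_subset _)

theorem preconnected : graph.Preconnected := fun v w =>
  let ⟨p, _⟩ := connAvoiding_empty v w
  ⟨p⟩

theorem kConnected_two : KConnected graph 2 := by
  refine ⟨by rw [infinite_univ.encard_eq]; exact ENat.natCast_lt_top 2, fun S hS hcard => ?_⟩
  obtain rfl | ⟨s, rfl⟩ := (ncard_le_one_iff_eq hS).1 (by omega)
  · exact induce_compl_connected_of_connAvoiding (a := joint 0) (notMem_empty _)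
      fun b c _ _ => connAvoiding_empty b c
  · exact induce_compl_connected_of_connAvoiding (a := joint (s.1 + 1))
      (ne_of_apply_ne Prod.fst (by simp)) fun _ _ => connAvoiding_singleton

theorem pairwise_disjoint_diamond : Pairwise (Disjoint on diamond) := by
  refine fun m n hmn => disjoint_left.2 fun e hm hn => hmn ?_
  simp only [diamond, mem_insert_iff, mem_singleton_iff] at hm hn
  rcases hm with rfl | rfl | rfl | rfl <;> simp [Prod.ext_iff] at hn <;> omega

theorem finite_diamond (n : ℕ) : (diamond n).Finite := by
  simp [diamond]

theorem isCircuit_diamond (n : ℕ) : IsCircuit graph (diamond n) := by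
  refine ⟨joint n, .cons (adj_joint_upper n) (.cons (adj_upper_joint_succ n)
    (.cons (adj_lower_joint_succ n).symm (.cons (adj_joint_lower n).symm .nil))), ?_, ?_⟩
  · rw [Walk.cons_isCycle_iff]
    simp only [Walk.isPath_def, Walk.support_cons, Walk.support_nil, Walk.edges_cons,
      Walk.edges_nil]
    simp
  · ext e
    simp only [Walk.edges_cons, Walk.edges_nil, diamond]
    simp

theorem even_ncard_diamonds_inter_cutEdges {A : Set Vertex}
    (hfin : (diamonds ∩ cutEdges graph A).Finite) :
    Even (diamonds ∩ cutEdges graph A).ncard := by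
  rw [diamonds, iUnion_inter] at hfin ⊢
  exact even_ncard_iUnion
    (fun m n hmn => (pairwise_disjoint_diamond hmn).mono inter_subset_left inter_subset_left)
    hfin fun n => (isCircuit_diamond n).even_ncard_inter_cutEdges

theorem joint_or_ray_notMem_of_connAvoiding {S : Set Vertex} {a b : Vertex} {k : ℕ}
    (h : ConnAvoiding graph S a b) (ha : a.1 ≤ k) (hb : k < b.1) :
    joint (k + 1) ∉ S ∨ ray k ∉ S ∧ ray (k + 1) ∉ S := by
  obtain ⟨w, hw⟩ := h
  obtain ⟨d, hd, hfst, hsnd⟩ := w.exists_boundary_dart {v | v.1 ≤ k} ha (by simpa using hb)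
  have hfst' := hw _ (w.dart_fst_mem_support_of_mem_darts hd)
  have hsnd' := hw _ (w.dart_snd_mem_support_of_mem_darts hd)
  rcases eq_of_adj_of_level_le d.adj hfst (by simpa using hsnd) with h | ⟨h1, h2⟩
  · exact .inl (h ▸ hsnd')
  · exact .inr ⟨h1 ▸ hfst', h2 ▸ hsnd'⟩

theorem joint_mem_eventually_constant {K : Set Vertex}
    (hK : ∀ a b, a ∈ K → b ∈ K → ConnAvoiding graph Kᶜ a b)
    (hKc : ∀ a b, a ∉ K → b ∉ K → ConnAvoiding graph K a b)
    (hup : ∀ k, ∃ a ∈ K, k < a.1) (hup' : ∀ k, ∃ a ∉ K, k < a.1) :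
    ∃ N, ∀ n, N ≤ n → (joint n ∈ K ↔ joint N ∈ K) := by
  obtain ⟨a, haK, -⟩ := hup 0
  obtain ⟨b, hbK, -⟩ := hup' 0
  -- Both sides cross from level `k` to `k + 1`, and each crossing uses `joint (k + 1)` or both of
  -- `ray k`, `ray (k + 1)`; being disjoint, the two sides split these vertices between them.
  have hswap : ∀ k, max a.1 b.1 ≤ k →
      (joint (k + 1) ∈ K ↔ ray k ∉ K) ∧ (joint (k + 1) ∈ K ↔ ray (k + 1) ∉ K) := by
    intro k hk
    obtain ⟨a', ha'K, ha'⟩ := hup k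
    obtain ⟨b', hb'K, hb'⟩ := hup' k
    have hin := joint_or_ray_notMem_of_connAvoiding (hK a a' haK ha'K) (by omega) ha'
    have hout := joint_or_ray_notMem_of_connAvoiding (hKc b b' hbK hb'K) (by omega) hb'
    simp only [notMem_compl_iff] at hin
    tauto
  refine ⟨max a.1 b.1 + 1, fun n hn => ?_⟩
  induction n, hn using Nat.le_induction with
  | base => rfl
  | succ n hn ih =>
    obtain ⟨k, rfl⟩ : ∃ k, n = k + 1 := ⟨n - 1, by omega⟩
    rw [← ih, (hswap (k + 1) (by omega)).1, (hswap k (by omega)).2]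

theorem diamonds_inter_cutEdges_finite {K : Set Vertex}
    (hK : ∀ a b, a ∈ K → b ∈ K → ConnAvoiding graph Kᶜ a b)
    (hKc : ∀ a b, a ∉ K → b ∉ K → ConnAvoiding graph K a b) :
    (diamonds ∩ cutEdges graph K).Finite := by
  have hcut : ∀ {X : Set Vertex} {k : ℕ}, X ⊆ {a | a.1 ≤ k} → (cutEdges graph X).Finite :=
    fun hk => cutEdges_finite neighborSet_finite ((finite_setOf_level_le _).subset hk)
  by_cases hbdd : ∃ k, K ⊆ {a | a.1 ≤ k}
  · exact (hcut hbdd.choose_spec).inter_of_right _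
  by_cases hbdd' : ∃ k, Kᶜ ⊆ {a | a.1 ≤ k}
  · rw [← cutEdges_compl]
    exact (hcut hbdd'.choose_spec).inter_of_right _
  simp only [not_exists, not_subset, mem_ofPred_eq, not_le] at hbdd hbdd'
  obtain ⟨N, hN⟩ := joint_mem_eventually_constant hK hKc hbdd hbdd'
  wlog hNK : joint N ∈ K generalizing K
  · rw [← cutEdges_compl]
    refine this (K := Kᶜ) (by simpa using hKc) (by simpa using hK) (by simpa using hbdd')
      (by simpa using hbdd) (fun n hn => not_congr (hN n hn)) hNK
  have hjoint : ∀ n, N ≤ n → joint n ∈ K := fun n hn => (hN n hn).2 hNK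
  -- A vertex outside `K` whose neighbours all lie in `K` would be all of the infinite side `Kᶜ`.
  have hmid : ∀ n, N ≤ n → ∀ v, graph.neighborSet v ⊆ {joint n, joint (n + 1)} →
      v ∈ K := by
    intro n hn v hv
    by_contra hvK
    obtain ⟨b, hbK, hb⟩ := hbdd' v.1
    refine ne_of_apply_ne Prod.fst hb.ne ((hKc v b hvK hbK).eq_of_neighborSet_subset ?_)
    exact hv.trans <|
      insert_subset (hjoint n hn) (singleton_subset_iff.2 (hjoint (n + 1) (by omega)))
  refine ((finite_Iio N).biUnion fun n _ => finite_diamond n).subset ?_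
  rintro e ⟨he, hcut⟩
  obtain ⟨n, hn⟩ := mem_iUnion.1 he
  refine mem_iUnion₂.2 ⟨n, mem_Iio.2 <| not_le.1 fun hNn => ?_, hn⟩
  have hu := hmid n hNn _ (neighborSet_upper n)
  have hl := hmid n hNn _ (neighborSet_lower n)
  have hj := hjoint n hNn
  have hj' := hjoint (n + 1) (by omega)
  simp only [diamond, mem_insert_iff, mem_singleton_iff] at hn
  rcases hn with rfl | rfl | rfl | rfl
  · exact (mem_cutEdges_iff (adj_joint_upper n)).1 hcut (iff_of_true hj hu)
  · exact (mem_cutEdges_iff (adj_upper_joint_succ n)).1 hcut (iff_of_true hu hj')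
  · exact (mem_cutEdges_iff (adj_lower_joint_succ n).symm).1 hcut (iff_of_true hj' hl)
  · exact (mem_cutEdges_iff (adj_joint_lower n).symm).1 hcut (iff_of_true hl hj)

theorem diamonds_inter_cutEdges_range_upper_infinite :
    (diamonds ∩ cutEdges graph (range upper)).Infinite := by
  refine infinite_of_injective_forall_mem (f := fun n => s(joint n, upper n)) ?_
    fun n => ⟨?_, ?_⟩
  · intro m n h
    simpa using h
  · exact mem_iUnion.2 ⟨n, by simp [diamond]⟩
  · rw [mem_cutEdges_iff (adj_joint_upper n)]
    simp

end DiamondChain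

/-- There are a locally finite 2-connected graph `G` and an edge set `D` meeting every
bond finitely and evenly, but meeting some cut infinitely. -/
theorem stmt_18 : ∃ (W : Type) (G : SimpleGraph W) (D : Set (Sym2 W)),
    (∀ x : W, (G.neighborSet x).Finite) ∧ KConnected G 2 ∧ D ⊆ G.edgeSet ∧
    (∀ B, IsBond G B → EvenInter D B) ∧
    ∃ C, IsCut G C ∧ (D ∩ C).Infinite := by
  refine ⟨DiamondChain.Vertex, DiamondChain.graph, DiamondChain.diamonds,
    DiamondChain.neighborSet_finite, DiamondChain.kConnected_two,
    DiamondChain.diamonds_subset_edgeSet, fun B hB => ?_,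
    cutEdges DiamondChain.graph (range DiamondChain.upper), ⟨_, rfl⟩,
    DiamondChain.diamonds_inter_cutEdges_range_upper_infinite⟩
  obtain ⟨K, rfl, hK, hKc⟩ := hB.exists_connAvoiding_sides DiamondChain.preconnected
  have hfin := DiamondChain.diamonds_inter_cutEdges_finite hK hKc
  exact ⟨hfin, DiamondChain.even_ncard_diamonds_inter_cutEdges hfin⟩
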